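/- Let Z be a symmetric n×n matrix of rank d with smallest nonzero eigenvalue magnitude |γ_d(Z)|, and E a symmetric n×n matrix with |γ_d(Z)| > 3‖E‖₂. Let V and Ṽ be the matrices of the top-d eigenvectors of Z and Z + E respectively. Then ‖sin Θ(V, Ṽ)‖₂ ≤ ‖E‖₂ / (|γ_d(Z)| - 3‖E‖₂). -/

import Mathlib

open Matrix

/-- Spectral (operator) norm of a square real matrix. -/
noncomputable def opNorm {n : ℕ} (A : Matrix (Fin n) (Fin n) ℝ) : ℝ :=
  ‖Matrix.toEuclideanCLM (𝕜 := ℝ) (n := Fin n) A‖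

/-- Singular values of a real matrix (square roots of the eigenvalues of `AᵀA`). -/
noncomputable def singvals {m k : ℕ} (A : Matrix (Fin m) (Fin k) ℝ) : Fin k → ℝ :=
  fun i => Real.sqrt ((show (Aᵀ * A).IsHermitian by
    simpa using Matrix.isHermitian_conjTranspose_mul_self A).eigenvalues i)

/-- The `sin Θ` matrix of two `n×d` matrices with orthonormal columns: the diagonal matrix
with entries `sin(arccos(σᵢ))` for `σᵢ` the singular values of `VᵀV'`. -/
noncomputable def sinTheta {n d : ℕ} (V V' : Matrix (Fin n) (Fin d) ℝ) :
    Matrix (Fin d) (Fin d) ℝ :=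
  Matrix.diagonal (fun i => Real.sin (Real.arccos (singvals (Vᵀ * V') i)))

/-! Let `P = 1 - VVᵀ` be the orthogonal projection killing the range of `V`, so that `PZ = 0`.
A min–max argument gives `|μₖ| ≥ gmin - ‖E‖` for the top `d` eigenvalues of `Z + E`: the
`d`-dimensional range of `V`, which `Z + E` stretches by at least `gmin - ‖E‖`, meets the span of
the columns `k, k+1, …` of `W`, which `Z + E` stretches by at most `|μₖ|`. Applying `P` to
`(Z + E)Ṽ = Ṽ diag(μ₁, …, μ_d)` gives `PṼ diag(μ₁, …, μ_d) = PEṼ`, hence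
`‖PṼ‖ ≤ ‖E‖ / (gmin - ‖E‖)`. Finally `(PṼ)ᵀ(PṼ) = 1 - (VᵀṼ)ᵀ(VᵀṼ)`, so each
`sin² θᵢ = 1 - σᵢ²` is an eigenvalue of `(PṼ)ᵀ(PṼ)` and is at most `‖PṼ‖²`. -/

open scoped Matrix.Norms.L2Operator

lemma EuclideanSpace.norm_le_norm_of_abs_le {n : Type*} [Fintype n] {x y : EuclideanSpace ℝ n}
    (h : ∀ i, |x i| ≤ |y i|) : ‖x‖ ≤ ‖y‖ := by
  simp only [EuclideanSpace.norm_eq, Real.norm_eq_abs]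
  exact Real.sqrt_le_sqrt (Finset.sum_le_sum fun i _ => pow_le_pow_left₀ (abs_nonneg _) (h i) 2)

lemma Submodule.exists_ne_zero_mem_ker_of_finrank_lt {K V V₂ : Type*} [DivisionRing K]
    [AddCommGroup V] [Module K V] [AddCommGroup V₂] [Module K V₂] [FiniteDimensional K V₂]
    (U : Submodule K V) [FiniteDimensional K U] (f : V →ₗ[K] V₂)
    (h : Module.finrank K V₂ < Module.finrank K U) : ∃ x ∈ U, x ≠ 0 ∧ f x = 0 := by
  obtain ⟨⟨x, hx⟩, hker, hne⟩ :=
    Submodule.exists_mem_ne_zero_of_ne_bot ((f ∘ₗ U.subtype).ker_ne_bot_of_finrank_lt h)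
  exact ⟨x, hx, by simpa using hne, by simpa using hker⟩

namespace Matrix

section Submatrix

variable {R m n k : Type*} [Semiring R] [Fintype m]

lemma transpose_mul_self_submatrix_id_eq_one [DecidableEq n] [DecidableEq k]
    {W : Matrix m n R} (hW : Wᵀ * W = 1) {f : k → n} (hf : Function.Injective f) :
    (W.submatrix id f)ᵀ * W.submatrix id f = 1 := by
  rw [transpose_submatrix, ← submatrix_mul _ _ _ _ _ Function.bijective_id, hW,
    submatrix_one _ hf]

lemma mul_submatrix_id_eq_of_mul_eq_mul_diagonal [Fintype n] [Fintype k] [DecidableEq n]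
    [DecidableEq k] {A : Matrix m m R} {W : Matrix m n R} {μ : n → R}
    (h : A * W = W * diagonal μ) (f : k → n) :
    A * W.submatrix id f = W.submatrix id f * diagonal (μ ∘ f) := by
  ext i j
  have hij := congrFun (congrFun h i) (f j)
  rw [mul_diagonal] at hij
  rw [mul_diagonal, submatrix_apply, id_eq, Function.comp_apply, ← hij]
  simp [mul_apply]

end Submatrix

section L2

variable {m n k : Type*} [Fintype m] [Fintype n] [Fintype k]

lemma norm_toEuclideanLin_of_transpose_mul_self [DecidableEq n] {A : Matrix m n ℝ}
    (hA : Aᵀ * A = 1) (x : EuclideanSpace ℝ n) : ‖toEuclideanLin A x‖ = ‖x‖ := by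
  rw [← sq_eq_sq₀ (norm_nonneg _) (norm_nonneg _), ← real_inner_self_eq_norm_sq,
    ← real_inner_self_eq_norm_sq]
  simp only [EuclideanSpace.inner_eq_star_dotProduct, toLpLin_apply, star_trivial]
  rw [dotProduct_mulVec, ← mulVec_transpose, mulVec_mulVec, hA, one_mulVec]

lemma l2_opNorm_le_one_of_transpose_mul_self [DecidableEq n] {A : Matrix m n ℝ}
    (hA : Aᵀ * A = 1) : ‖A‖ ≤ 1 := by
  rw [l2_opNorm_def]
  refine ContinuousLinearMap.opNorm_le_bound _ zero_le_one fun x => ?_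
  rw [one_mul]
  exact (norm_toEuclideanLin_of_transpose_mul_self hA x).le

lemma toEuclideanLin_diagonal_apply [DecidableEq n] (v : n → ℝ) (x : EuclideanSpace ℝ n)
    (i : n) : toEuclideanLin (diagonal v) x i = v i * x i := by
  simp [toLpLin_apply, mulVec_diagonal]

lemma mul_norm_le_norm_toEuclideanLin_diagonal [DecidableEq n] {v : n → ℝ} {c : ℝ}
    (hc : 0 ≤ c) (hv : ∀ i, c ≤ |v i|) (x : EuclideanSpace ℝ n) :
    c * ‖x‖ ≤ ‖toEuclideanLin (diagonal v) x‖ := by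
  rw [← abs_of_nonneg hc, ← Real.norm_eq_abs, ← norm_smul]
  refine EuclideanSpace.norm_le_norm_of_abs_le fun i => ?_
  rw [toEuclideanLin_diagonal_apply, PiLp.smul_apply, smul_eq_mul, abs_mul, abs_mul,
    abs_of_nonneg hc]
  exact mul_le_mul_of_nonneg_right (hv i) (abs_nonneg _)

lemma mul_norm_le_norm_toEuclideanLin_of_mem_range [DecidableEq m] [DecidableEq n]
    {V : Matrix n m ℝ} (hV : Vᵀ * V = 1) {γ : m → ℝ} {c : ℝ} (hc : 0 ≤ c)
    (hγ : ∀ i, c ≤ |γ i|) {x : EuclideanSpace ℝ n}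
    (hx : x ∈ LinearMap.range (toEuclideanLin V)) :
    c * ‖x‖ ≤ ‖toEuclideanLin (V * diagonal γ * Vᵀ) x‖ := by
  obtain ⟨y, rfl⟩ := hx
  have hVy : toEuclideanLin Vᵀ (toEuclideanLin V y) = y := by
    rw [← LinearMap.comp_apply, ← toLpLin_mul_same, hV, toLpLin_one, LinearMap.id_apply]
  simp only [toLpLin_mul_same, LinearMap.comp_apply, hVy,
    norm_toEuclideanLin_of_transpose_mul_self hV]
  exact mul_norm_le_norm_toEuclideanLin_diagonal hc hγ y

lemma abs_le_l2_opNorm_of_mulVec_eq_smul [DecidableEq n] (A : Matrix n n ℝ)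
    {v : EuclideanSpace ℝ n} (hv : v ≠ 0) {t : ℝ} (h : A *ᵥ v = t • v) : |t| ≤ ‖A‖ := by
  have hAv : ‖t • v‖ ≤ ‖A‖ * ‖v‖ := by simpa [h] using A.l2_opNorm_mulVec v
  rw [norm_smul, Real.norm_eq_abs] at hAv
  exact le_of_mul_le_mul_right hAv (norm_pos_iff.mpr hv)

lemma one_sub_sq_l2_opNorm_le_eigenvalues [DecidableEq n] {G : Matrix n n ℝ}
    (hG : G.IsHermitian) (X : Matrix m n ℝ) (h : G + Xᵀ * X = 1) (i : n) :
    1 - ‖X‖ ^ 2 ≤ hG.eigenvalues i := by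
  have hX : (Xᵀ * X) *ᵥ hG.eigenvectorBasis i =
      (1 - hG.eigenvalues i) • hG.eigenvectorBasis i := by
    rw [eq_sub_of_add_eq' h, sub_mulVec, one_mulVec, hG.mulVec_eigenvectorBasis, sub_smul,
      one_smul]
  have := (Xᵀ * X).abs_le_l2_opNorm_of_mulVec_eq_smul (hG.eigenvectorBasis.toBasis.ne_zero i) hX
  rw [← conjTranspose_eq_transpose_of_trivial, l2_opNorm_conjTranspose_mul_self] at this
  nlinarith [le_abs_self (1 - hG.eigenvalues i)]

lemma l2_opNorm_le_div_of_le_abs [DecidableEq n] (X : Matrix m n ℝ) {ν : n → ℝ} {δ : ℝ}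
    (hδ : 0 < δ) (hν : ∀ i, δ ≤ |ν i|) : ‖X‖ ≤ ‖X * diagonal ν‖ / δ := by
  have hν0 : ∀ i, ν i ≠ 0 := fun i h => by simpa [h] using hδ.trans_le (hν i)
  have hinv : ‖(diagonal ν⁻¹ : Matrix n n ℝ)‖ ≤ δ⁻¹ := by
    rw [l2_opNorm_diagonal]
    refine (pi_norm_le_iff_of_nonneg (inv_nonneg.mpr hδ.le)).mpr fun i => ?_
    rw [Pi.inv_apply, norm_inv, Real.norm_eq_abs]
    exact inv_anti₀ hδ (hν i)
  calc ‖X‖ = ‖X * diagonal ν * diagonal ν⁻¹‖ := by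
        rw [Matrix.mul_assoc, diagonal_mul_diagonal]
        simp [mul_inv_cancel₀ (hν0 _)]
    _ ≤ ‖X * diagonal ν‖ * δ⁻¹ :=
        (l2_opNorm_mul _ _).trans (mul_le_mul_of_nonneg_left hinv (norm_nonneg _))
    _ = ‖X * diagonal ν‖ / δ := (div_eq_mul_inv _ _).symm

lemma transpose_mul_self_one_sub_mul_transpose [DecidableEq m] [DecidableEq n]
    {V : Matrix n m ℝ} (hV : Vᵀ * V = 1) :
    (1 - V * Vᵀ)ᵀ * (1 - V * Vᵀ) = 1 - V * Vᵀ := by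
  simp only [transpose_sub, transpose_one, transpose_mul, transpose_transpose, Matrix.sub_mul,
    Matrix.mul_sub, Matrix.one_mul, Matrix.mul_one, Matrix.mul_assoc,
    ← Matrix.mul_assoc Vᵀ V Vᵀ, hV]
  abel

lemma l2_opNorm_one_sub_mul_transpose_le_one [DecidableEq m] [DecidableEq n]
    {V : Matrix n m ℝ} (hV : Vᵀ * V = 1) : ‖1 - V * Vᵀ‖ ≤ 1 := by
  have := l2_opNorm_conjTranspose_mul_self (1 - V * Vᵀ)
  rw [conjTranspose_eq_transpose_of_trivial, transpose_mul_self_one_sub_mul_transpose hV] at this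
  nlinarith [norm_nonneg (1 - V * Vᵀ)]

theorem l2_opNorm_one_sub_mul_transpose_mul_le [DecidableEq m] [DecidableEq n] [DecidableEq k]
    {V : Matrix n m ℝ} (hV : Vᵀ * V = 1) (B : Matrix m n ℝ) (E : Matrix n n ℝ)
    {V' : Matrix n k ℝ} (hV' : V'ᵀ * V' = 1) {ν : k → ℝ} {δ : ℝ} (hδ : 0 < δ)
    (hν : ∀ i, δ ≤ |ν i|) (h : (V * B + E) * V' = V' * diagonal ν) :
    ‖(1 - V * Vᵀ) * V'‖ ≤ ‖E‖ / δ := by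
  set P := 1 - V * Vᵀ
  have hPV : P * V = 0 := by
    rw [Matrix.sub_mul, Matrix.one_mul, Matrix.mul_assoc, hV, Matrix.mul_one, sub_self]
  have hkey : P * V' * diagonal ν = P * E * V' := by
    rw [Matrix.mul_assoc, ← h, Matrix.add_mul, Matrix.mul_add, ← Matrix.mul_assoc P,
      ← Matrix.mul_assoc P, hPV, Matrix.zero_mul, Matrix.zero_mul, zero_add, Matrix.mul_assoc]
  have hPEV : ‖P * E * V'‖ ≤ ‖E‖ :=
    calc ‖P * E * V'‖ ≤ ‖P‖ * ‖E‖ * ‖V'‖ :=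
          (l2_opNorm_mul _ _).trans (mul_le_mul_of_nonneg_right (l2_opNorm_mul _ _)
            (norm_nonneg _))
      _ ≤ 1 * ‖E‖ * 1 := by
          gcongr
          exacts [l2_opNorm_one_sub_mul_transpose_le_one hV,
            l2_opNorm_le_one_of_transpose_mul_self hV']
      _ = ‖E‖ := by ring
  calc ‖P * V'‖ ≤ ‖P * V' * diagonal ν‖ / δ := l2_opNorm_le_div_of_le_abs _ hδ hν
    _ = ‖P * E * V'‖ / δ := by rw [hkey]
    _ ≤ ‖E‖ / δ := by gcongr

end L2

lemma norm_toEuclideanLin_diagonal_le_of_eq_zero_of_lt {n : ℕ} {v : Fin n → ℝ}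
    (hv : ∀ i j, i ≤ j → |v j| ≤ |v i|) (k : Fin n) {x : EuclideanSpace ℝ (Fin n)}
    (hx : ∀ j < k, x j = 0) : ‖toEuclideanLin (diagonal v) x‖ ≤ |v k| * ‖x‖ := by
  rw [← abs_abs (v k), ← Real.norm_eq_abs, ← norm_smul]
  refine EuclideanSpace.norm_le_norm_of_abs_le fun j => ?_
  rw [toEuclideanLin_diagonal_apply, PiLp.smul_apply, smul_eq_mul, abs_mul, abs_mul, abs_abs]
  rcases lt_or_ge j k with hjk | hkj
  · simp [hx j hjk]
  · exact mul_le_mul_of_nonneg_right (hv k j hkj) (abs_nonneg _)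

theorem le_abs_of_mul_norm_le_on_submodule {n : ℕ} {W : Matrix (Fin n) (Fin n) ℝ}
    (hW : Wᵀ * W = 1) {μ : Fin n → ℝ} (hμ : ∀ i j, i ≤ j → |μ j| ≤ |μ i|) (k : Fin n)
    (U : Submodule ℝ (EuclideanSpace ℝ (Fin n))) (hU : (k : ℕ) < Module.finrank ℝ U) {c : ℝ}
    (hc : ∀ x ∈ U, c * ‖x‖ ≤ ‖toEuclideanLin (W * diagonal μ * Wᵀ) x‖) : c ≤ |μ k| := by
  -- the first `k` coordinates of `x` in the orthonormal basis formed by the columns of `W`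
  let f : EuclideanSpace ℝ (Fin n) →ₗ[ℝ] (Fin k → ℝ) := LinearMap.pi fun j =>
    (EuclideanSpace.proj (Fin.castLE k.is_lt.le j)).toLinearMap ∘ₗ toEuclideanLin Wᵀ
  obtain ⟨x, hxU, hx0, hfx⟩ := U.exists_ne_zero_mem_ker_of_finrank_lt f (by simpa using hU)
  have hhead : ∀ j < k, toEuclideanLin Wᵀ x j = 0 := fun j hj => congrFun hfx ⟨j, hj⟩
  have hWt : Wᵀᵀ * Wᵀ = 1 := by rw [transpose_transpose]; exact mul_eq_one_comm.mp hW
  have hup : ‖toEuclideanLin (W * diagonal μ * Wᵀ) x‖ ≤ |μ k| * ‖x‖ :=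
    calc _ = ‖toEuclideanLin (diagonal μ) (toEuclideanLin Wᵀ x)‖ := by
          simp only [toLpLin_mul_same, LinearMap.comp_apply]
          exact norm_toEuclideanLin_of_transpose_mul_self hW _
      _ ≤ |μ k| * ‖toEuclideanLin Wᵀ x‖ :=
          norm_toEuclideanLin_diagonal_le_of_eq_zero_of_lt hμ k hhead
      _ = |μ k| * ‖x‖ := by rw [norm_toEuclideanLin_of_transpose_mul_self hWt]
  exact le_of_mul_le_mul_right ((hc x hxU).trans hup) (norm_pos_iff.mpr hx0)

theorem sub_l2_opNorm_le_abs_of_add_eq {n d : ℕ} {V : Matrix (Fin n) (Fin d) ℝ}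
    (hV : Vᵀ * V = 1) {γ : Fin d → ℝ} {c : ℝ} (hc : 0 ≤ c) (hγ : ∀ i, c ≤ |γ i|)
    (E : Matrix (Fin n) (Fin n) ℝ) {W : Matrix (Fin n) (Fin n) ℝ} (hW : Wᵀ * W = 1)
    {μ : Fin n → ℝ} (hμ : ∀ i j, i ≤ j → |μ j| ≤ |μ i|)
    (h : V * diagonal γ * Vᵀ + E = W * diagonal μ * Wᵀ) (k : Fin n) (hk : (k : ℕ) < d) :
    c - ‖E‖ ≤ |μ k| := by
  let Vᵢ : EuclideanSpace ℝ (Fin d) →ₗᵢ[ℝ] EuclideanSpace ℝ (Fin n) :=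
    ⟨toEuclideanLin V, norm_toEuclideanLin_of_transpose_mul_self hV⟩
  refine le_abs_of_mul_norm_le_on_submodule hW hμ k (LinearMap.range (toEuclideanLin V)) ?_
    fun x hx => ?_
  · rwa [LinearMap.finrank_range_of_inj Vᵢ.injective, finrank_euclideanSpace_fin]
  · rw [← h, map_add, LinearMap.add_apply, sub_mul]
    calc c * ‖x‖ - ‖E‖ * ‖x‖
        ≤ ‖toEuclideanLin (V * diagonal γ * Vᵀ) x‖ - ‖toEuclideanLin E x‖ :=
          sub_le_sub (mul_norm_le_norm_toEuclideanLin_of_mem_range hV hc hγ hx)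
            (E.l2_opNorm_mulVec x)
      _ ≤ _ := norm_sub_le_norm_add _ _

end Matrix

lemma opNorm_eq_l2_opNorm {n : ℕ} (A : Matrix (Fin n) (Fin n) ℝ) : opNorm A = ‖A‖ := rfl

theorem opNorm_sinTheta_le {n d : ℕ} {V V' : Matrix (Fin n) (Fin d) ℝ} (hV : Vᵀ * V = 1)
    (hV' : V'ᵀ * V' = 1) : opNorm (sinTheta V V') ≤ ‖(1 - V * Vᵀ) * V'‖ := by
  set X := (1 - V * Vᵀ) * V'
  have hXX : Xᵀ * X = 1 - (Vᵀ * V')ᵀ * (Vᵀ * V') :=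
    calc Xᵀ * X = V'ᵀ * ((1 - V * Vᵀ)ᵀ * (1 - V * Vᵀ)) * V' := by
          simp only [X, transpose_mul, Matrix.mul_assoc]
      _ = _ := by
          rw [transpose_mul_self_one_sub_mul_transpose hV, Matrix.mul_sub, Matrix.sub_mul,
            Matrix.mul_one, hV', transpose_mul, transpose_transpose, Matrix.mul_assoc,
            Matrix.mul_assoc, Matrix.mul_assoc]
  have hG : ((Vᵀ * V')ᵀ * (Vᵀ * V')).IsHermitian := by
    simpa using isHermitian_conjTranspose_mul_self (Vᵀ * V')
  have hG0 : ∀ i, 0 ≤ hG.eigenvalues i := by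
    have hpsd : ((Vᵀ * V')ᵀ * (Vᵀ * V')).PosSemidef := by
      simpa using posSemidef_conjTranspose_mul_self (Vᵀ * V')
    exact hpsd.eigenvalues_nonneg
  rw [opNorm_eq_l2_opNorm, sinTheta, l2_opNorm_diagonal]
  refine (pi_norm_le_iff_of_nonneg (norm_nonneg _)).mpr fun i => ?_
  rw [Real.sin_arccos, Real.norm_eq_abs, abs_of_nonneg (Real.sqrt_nonneg _), singvals,
    Real.sq_sqrt (hG0 i)]
  calc √(1 - hG.eigenvalues i) ≤ √(‖X‖ ^ 2) := Real.sqrt_le_sqrt (by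
        linarith [one_sub_sq_l2_opNorm_le_eigenvalues hG X (by rw [hXX, add_sub_cancel]) i])
    _ = ‖X‖ := Real.sqrt_sq (norm_nonneg _)

theorem sinTheta_perturbation_bound_general {n d : ℕ} (hd : d ≤ n)
    (Z E : Matrix (Fin n) (Fin n) ℝ)
    (V : Matrix (Fin n) (Fin d) ℝ) (γ : Fin d → ℝ)
    (hV : Vᵀ * V = 1) (hZdecomp : Z = V * Matrix.diagonal γ * Vᵀ)
    (gmin : ℝ) (hgmin : ∀ i, gmin ≤ |γ i|)
    (hgap : 3 * opNorm E < gmin)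
    (W : Matrix (Fin n) (Fin n) ℝ) (μ : Fin n → ℝ)
    (hW : Wᵀ * W = 1)
    (hZE : Z + E = W * Matrix.diagonal μ * Wᵀ)
    (hsorted : ∀ i j : Fin n, i ≤ j → |μ j| ≤ |μ i|) :
    opNorm (sinTheta V (W.submatrix id (Fin.castLE hd)))
      ≤ opNorm E / (gmin - 3 * opNorm E) := by
  rw [opNorm_eq_l2_opNorm] at hgap ⊢
  have hE : 0 ≤ ‖E‖ := norm_nonneg E
  set V' := W.submatrix id (Fin.castLE hd)
  have hV' : V'ᵀ * V' = 1 :=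
    transpose_mul_self_submatrix_id_eq_one hW (Fin.castLE_injective hd)
  have hweyl : ∀ i, gmin - ‖E‖ ≤ |(μ ∘ Fin.castLE hd) i| := fun i =>
    sub_l2_opNorm_le_abs_of_add_eq hV (by linarith) hgmin E hW hsorted (hZdecomp ▸ hZE) _ i.is_lt
  have heig : (V * (diagonal γ * Vᵀ) + E) * V' = V' * diagonal (μ ∘ Fin.castLE hd) := by
    refine mul_submatrix_id_eq_of_mul_eq_mul_diagonal ?_ _
    rw [← Matrix.mul_assoc, ← hZdecomp, hZE, Matrix.mul_assoc _ Wᵀ W, hW, Matrix.mul_one]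
  calc opNorm (sinTheta V V') ≤ ‖(1 - V * Vᵀ) * V'‖ := opNorm_sinTheta_le hV hV'
    _ ≤ ‖E‖ / (gmin - ‖E‖) :=
        l2_opNorm_one_sub_mul_transpose_mul_le hV _ E hV' (by linarith) hweyl heig
    _ ≤ ‖E‖ / (gmin - 3 * ‖E‖) := by gcongr; linarith

/-- Cai–Zhang type sin-theta bound.  Let `Z` be symmetric of rank `d` with eigendecomposition
`Z = V·diag(γ)·Vᵀ` (`V ∈ ℝ^{n×d}` orthonormal, all `γᵢ ≠ 0`), let `gmin = |γ_d(Z)|` be the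
smallest nonzero eigenvalue magnitude, and let `E` be symmetric with `gmin > 3‖E‖₂`.
If `Z + E = W·diag(μ)·Wᵀ` with `W` orthogonal and `|μ|` sorted in decreasing order, so the
first `d` columns of `W` are the top-`d` eigenvectors `Ṽ` of `Z + E`, then
`‖sin Θ(V, Ṽ)‖₂ ≤ ‖E‖₂ / (gmin - 3‖E‖₂)`. -/
theorem sinTheta_perturbation_bound {n d : ℕ} (hd : d ≤ n)
    (Z E : Matrix (Fin n) (Fin n) ℝ) (hZ : Z.IsSymm) (hE : E.IsSymm)
    (V : Matrix (Fin n) (Fin d) ℝ) (γ : Fin d → ℝ)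
    (hV : Vᵀ * V = 1) (hZdecomp : Z = V * Matrix.diagonal γ * Vᵀ)
    (hγ : ∀ i, γ i ≠ 0) (hrank : Z.rank = d)
    (gmin : ℝ) (hgmin : ∀ i, gmin ≤ |γ i|) (hgmin' : ∃ i, gmin = |γ i|)
    (hgap : 3 * opNorm E < gmin)
    (W : Matrix (Fin n) (Fin n) ℝ) (μ : Fin n → ℝ)
    (hW : Wᵀ * W = 1) (hW' : W * Wᵀ = 1)
    (hZE : Z + E = W * Matrix.diagonal μ * Wᵀ)
    (hsorted : ∀ i j : Fin n, i ≤ j → |μ j| ≤ |μ i|) :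
    opNorm (sinTheta V (W.submatrix id (Fin.castLE hd)))
      ≤ opNorm E / (gmin - 3 * opNorm E) :=
  sinTheta_perturbation_bound_general hd Z E V γ hV hZdecomp gmin hgmin hgap W μ hW hZE hsorted
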